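/- arXiv:1905.08842 — 2 statements merged into one kernel-verified Lean document; each statement's English description precedes it below -/
import Mathlib

section
/- Let S be a set of propositional clauses and let G_S be the directed graph whose vertices are the triples (L, C, in) and (L, C, out) with C ∈ S and L ∈ C, with an edge from (L, C, out) to (M, D, in) whenever L and M are complementary (type 1), and an edge from (L, C, in) to (M, C, out) whenever L and M are distinct literals of the same clause C (type 2). Then for all n ≥ 2 and clauses C, D ∈ S: there is an alternating path of length n in S from C to D if and only if there exist literals L ∈ C and M ∈ D and a directed path in G_S from the vertex (L, C, out) to the vertex (M, D, in) consisting of exactly 2(n−1) vertices. -/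
/-- A propositional literal: an atom together with a Boolean sign. -/
abbrev Lit (α : Type) := α × Bool

/-- A propositional clause: a finite set of literals. -/
abbrev Clause (α : Type) := Finset (α × Bool)

/-- The complement of a literal flips its sign. -/
def Lit.compl {α : Type} (L : Lit α) : Lit α := (L.1, !L.2)

/-- A valuation satisfies a literal `(a, s)` iff `v a = s`. -/
def SatLit {α : Type} (v : α → Bool) (L : Lit α) : Prop := v L.1 = L.2

/-- A valuation satisfies a clause iff it satisfies some literal of it. -/
def SatClause {α : Type} (v : α → Bool) (C : Clause α) : Prop := ∃ L ∈ C, SatLit v L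

/-- A valuation satisfies a set of clauses iff it satisfies every clause in it. -/
def SatSet {α : Type} (v : α → Bool) (S : Set (Clause α)) : Prop := ∀ C ∈ S, SatClause v C

/-- A set of clauses is satisfiable if some valuation satisfies it. -/
def Satisfiable {α : Type} (S : Set (Clause α)) : Prop := ∃ v, SatSet v S

/-- `IsAltPath S Cs ps` : the sequence of clauses `Cs` together with the list of
linking literal pairs `ps` is an alternating path in `S`.  The path
`C₁,(L₁,M₂),C₂,…,(Lₙ₋₁,Mₙ),Cₙ` is encoded with `Cs = [C₁,…,Cₙ]` and
`ps = [(L₁,M₂),…,(Lₙ₋₁,Mₙ)]`. -/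
def IsAltPath {α : Type} [DecidableEq α] (S : Set (Clause α))
    (Cs : List (Clause α)) (ps : List (Lit α × Lit α)) : Prop :=
  Cs ≠ [] ∧ ps.length + 1 = Cs.length ∧
  (∀ C ∈ Cs, C ∈ S) ∧
  (∀ i, ∀ h : i < ps.length,
    (ps.get ⟨i, h⟩).1 ∈ Cs.getD i ∅ ∧
    (ps.get ⟨i, h⟩).2 ∈ Cs.getD (i + 1) ∅ ∧
    (ps.get ⟨i, h⟩).2 = Lit.compl (ps.get ⟨i, h⟩).1) ∧
  (∀ i, ∀ h : i + 1 < ps.length,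
    (ps.get ⟨i + 1, h⟩).1 ≠ (ps.get ⟨i, Nat.lt_of_succ_lt h⟩).2)

/-- There is an alternating path in `S` from `C` to `D` of length `n`
(length counts the clauses). -/
def AltPathFromTo {α : Type} [DecidableEq α] (S : Set (Clause α))
    (C D : Clause α) (n : ℕ) : Prop :=
  ∃ Cs ps, IsAltPath S Cs ps ∧ Cs.head? = some C ∧ Cs.getLast? = some D ∧ Cs.length = n

/-- The relevance distance `d_S(C, D)`: the minimum length of an alternating path
in `S` from `C` to `D`, or `∞` if there is none. -/
noncomputable def relDist {α : Type} [DecidableEq α] (S : Set (Clause α))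
    (C D : Clause α) : ℕ∞ :=
  ⨅ n ∈ {n : ℕ | AltPathFromTo S C D n}, (n : ℕ∞)

/-- `d_S(T, C) = min {d_S(D, C) : D ∈ T}`. -/
noncomputable def relDistFrom {α : Type} [DecidableEq α] (S T : Set (Clause α))
    (C : Clause α) : ℕ∞ :=
  ⨅ D ∈ T, relDist S D C

/-- `R_{n,S}(T) = {C ∈ S : d_S(T, C) ≤ n}`. -/
def RelSet {α : Type} [DecidableEq α] (n : ℕ) (S T : Set (Clause α)) : Set (Clause α) :=
  {C ∈ S | relDistFrom S T C ≤ (n : ℕ∞)}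

/-- A set of clauses is relevance connected if between any two of its clauses
there is an alternating path in it. -/
def RelevanceConnected {α : Type} [DecidableEq α] (S : Set (Clause α)) : Prop :=
  ∀ C ∈ S, ∀ D ∈ S, ∃ n, AltPathFromTo S C D n

/-- A set of clauses is minimal unsatisfiable if it is unsatisfiable and every
proper subset of it is satisfiable. -/
def MinimalUnsat {α : Type} (S : Set (Clause α)) : Prop :=
  ¬ Satisfiable S ∧ ∀ T ⊂ S, Satisfiable T

/-- `S'` is a support set for `S`: `S' ⊆ S` and every unsatisfiable subset of `S`
meets `S'`. -/
def IsSupport {α : Type} (S S' : Set (Clause α)) : Prop :=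
  S' ⊆ S ∧ ∀ T ⊆ S, ¬ Satisfiable T → (T ∩ S').Nonempty

/-- `D` is a resolvent of `C₁` and `C₂` upon literal `L`. -/
def IsResolvent {α : Type} [DecidableEq α] (D C₁ C₂ : Clause α) (L : Lit α) : Prop :=
  L ∈ C₁ ∧ Lit.compl L ∈ C₂ ∧ D = (C₁.erase L) ∪ (C₂.erase (Lit.compl L))

/-- `Cs` is a resolution sequence from `S`: every clause is an input clause
(member of `S`) or a resolvent of two earlier clauses. -/
def IsResolutionSeq {α : Type} [DecidableEq α] (S : Set (Clause α))
    (Cs : List (Clause α)) : Prop :=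
  ∀ i, ∀ h : i < Cs.length,
    Cs.get ⟨i, h⟩ ∈ S ∨
    ∃ j k L, j < i ∧ k < i ∧ IsResolvent (Cs.get ⟨i, h⟩) (Cs.getD j ∅) (Cs.getD k ∅) L

/-- `Cs` is a resolution refutation of length `n` from `S`: a resolution sequence
of `n` clauses ending in the empty clause. -/
def IsRefutation {α : Type} [DecidableEq α] (S : Set (Clause α))
    (Cs : List (Clause α)) (n : ℕ) : Prop :=
  IsResolutionSeq S Cs ∧ Cs.length = n ∧ Cs.getLast? = some (∅ : Clause α)
/-- A vertex of the graph `G_S`: a literal, a clause, and a flag (`true` = "out",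
`false` = "in"). -/
structure Vtx (α : Type) where
  lit : Lit α
  clause : Clause α
  out : Bool

/-- A vertex is valid for `S` if its clause is in `S` and contains its literal. -/
def ValidVtx {α : Type} (S : Set (Clause α)) (v : Vtx α) : Prop :=
  v.clause ∈ S ∧ v.lit ∈ v.clause

/-- The edges of `G_S`: type 1 edges go from `(L, C, out)` to `(M, D, in)` when
`L` and `M` are complementary; type 2 edges go from `(L, C, in)` to `(M, C, out)`
when `L` and `M` are distinct literals of the same clause `C`. -/
def GEdge {α : Type} (S : Set (Clause α)) (v w : Vtx α) : Prop :=
  ValidVtx S v ∧ ValidVtx S w ∧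
  ((v.out = true ∧ w.out = false ∧ w.lit = Lit.compl v.lit) ∨
   (v.out = false ∧ w.out = true ∧ w.clause = v.clause ∧ w.lit ≠ v.lit))

/-! A directed path in `G_S` from an out-vertex to an in-vertex alternates out, in, out, …, in,
so its `2(n-1)` vertices are `n-1` type 1 edges, the links `(Lᵢ, Mᵢ₊₁)`, joined by type 2
edges, which say exactly that `Lᵢ₊₁ ≠ Mᵢ₊₁` inside `Cᵢ₊₁`. Once the first literal `L₁` is
fixed, both kinds of path therefore unfold by the same recursion: a link from `C` through `L₁`
into a clause `C'` containing `L₁ᶜ`, followed by a shorter path leaving `C'` through a literal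
other than `L₁ᶜ`. -/

section
variable {α : Type} {S : Set (Clause α)}

def GPathFromLit (S : Set (Clause α)) (C : Clause α) (L : Lit α) (D : Clause α) (m : ℕ) : Prop :=
  ∃ M ∈ D, ∃ vs : List (Vtx α), vs.length = m ∧ vs.head? = some ⟨L, C, true⟩ ∧
    vs.getLast? = some ⟨M, D, false⟩ ∧ vs.IsChain (GEdge S) ∧ ∀ v ∈ vs, ValidVtx S v

theorem GPathFromLit.lit_mem {C D : Clause α} {L : Lit α} {m : ℕ}
    (h : GPathFromLit S C L D m) : L ∈ C := by
  obtain ⟨-, -, vs, -, hhead, -, -, hvalid⟩ := h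
  exact (hvalid _ (List.mem_of_mem_head? hhead)).2

theorem gPathFromLit_two_iff {C D : Clause α} {L : Lit α} :
    GPathFromLit S C L D 2 ↔ C ∈ S ∧ L ∈ C ∧ D ∈ S ∧ L.compl ∈ D := by
  constructor
  · rintro ⟨M, hM, vs, hlen, hhead, hlast, hchain, -⟩
    obtain ⟨v₁, v₂, rfl⟩ := List.length_eq_two.mp hlen
    obtain rfl : v₁ = ⟨L, C, true⟩ := by simpa using hhead
    obtain rfl : v₂ = ⟨M, D, false⟩ := by simpa using hlast
    obtain ⟨⟨hC, hL⟩, ⟨hD, hMD⟩, hedge⟩ := List.isChain_pair.mp hchain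
    obtain rfl : M = L.compl := by simpa using hedge
    exact ⟨hC, hL, hD, hMD⟩
  · rintro ⟨hC, hL, hD, hLD⟩
    refine ⟨L.compl, hLD, [⟨L, C, true⟩, ⟨L.compl, D, false⟩], rfl, rfl, rfl,
      List.isChain_pair.mpr ⟨⟨hC, hL⟩, ⟨hD, hLD⟩, .inl ⟨rfl, rfl, rfl⟩⟩, ?_⟩
    simpa [ValidVtx] using ⟨⟨hC, hL⟩, hD, hLD⟩

theorem gPathFromLit_add_two_iff {C D : Clause α} {L : Lit α} {m : ℕ} (hm : m ≠ 0) :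
    GPathFromLit S C L D (m + 2) ↔
      C ∈ S ∧ L ∈ C ∧ ∃ C', L.compl ∈ C' ∧ ∃ L' ≠ L.compl, GPathFromLit S C' L' D m := by
  constructor
  · rintro ⟨M, hM, vs, hlen, hhead, hlast, hchain, hvalid⟩
    obtain ⟨v₁, ⟨l₂, C₂, o₂⟩, ⟨L', C', o₃⟩, vs, rfl⟩ :
        ∃ v₁ v₂ v₃ vs', vs = v₁ :: v₂ :: v₃ :: vs' := by
      rcases vs with _ | ⟨v₁, _ | ⟨v₂, _ | ⟨v₃, vs⟩⟩⟩ <;> simp_all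
    obtain rfl : v₁ = ⟨L, C, true⟩ := by simpa using hhead
    simp only [List.isChain_cons_cons] at hchain
    obtain ⟨⟨⟨hC, hL⟩, ⟨-, hl₂⟩, h₁₂⟩, ⟨-, -, h₂₃⟩, hchain⟩ := hchain
    obtain ⟨rfl, rfl⟩ : o₂ = false ∧ l₂ = L.compl := by simpa using h₁₂
    obtain ⟨rfl, rfl, hL'ne⟩ : o₃ = true ∧ C' = C₂ ∧ L' ≠ L.compl := by simpa using h₂₃
    refine ⟨hC, hL, C', hl₂, L', hL'ne, M, hM, _ :: vs, by simpa using hlen, rfl,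
      by simpa [List.getLast?_cons_cons] using hlast, hchain, fun v hv => hvalid v (by simp [hv])⟩
  · rintro ⟨hC, hL, C', hLC', L', hL'ne, M, hM, vs, hlen, hhead, hlast, hchain, hvalid⟩
    obtain ⟨vs, rfl⟩ : ∃ vs', vs = ⟨L', C', true⟩ :: vs' := by
      rcases vs with _ | ⟨v, vs⟩
      · simp at hhead
      · exact ⟨vs, by simpa using hhead⟩
    obtain ⟨hC', hL'C'⟩ := hvalid _ List.mem_cons_self
    refine ⟨M, hM, ⟨L, C, true⟩ :: ⟨L.compl, C', false⟩ :: ⟨L', C', true⟩ :: vs, by simp [hlen],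
      rfl, by simpa [List.getLast?_cons_cons] using hlast, ?_, ?_⟩
    · simp only [List.isChain_cons_cons]
      exact ⟨⟨⟨hC, hL⟩, ⟨hC', hLC'⟩, .inl ⟨rfl, rfl, rfl⟩⟩,
        ⟨⟨hC', hLC'⟩, ⟨hC', hL'C'⟩, .inr ⟨rfl, rfl, rfl, hL'ne⟩⟩, hchain⟩
    · exact List.forall_mem_cons.2 ⟨⟨hC, hL⟩, List.forall_mem_cons.2 ⟨⟨hC', hLC'⟩, hvalid⟩⟩

variable [DecidableEq α]

theorem isAltPath_pair_iff {C C' : Clause α} {p : Lit α × Lit α} :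
    IsAltPath S [C, C'] [p] ↔ C ∈ S ∧ C' ∈ S ∧ p.1 ∈ C ∧ p.2 ∈ C' ∧ p.2 = p.1.compl := by
  simp [IsAltPath, and_assoc]

theorem isAltPath_cons_cons_iff {C C' : Clause α} {Cs : List (Clause α)}
    {p q : Lit α × Lit α} {ps : List (Lit α × Lit α)} :
    IsAltPath S (C :: C' :: Cs) (p :: q :: ps) ↔
      C ∈ S ∧ p.1 ∈ C ∧ p.2 ∈ C' ∧ p.2 = p.1.compl ∧ q.1 ≠ p.2 ∧
        IsAltPath S (C' :: Cs) (q :: ps) := by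
  simp only [IsAltPath, List.length_cons, List.mem_cons, forall_eq_or_imp, Nat.add_lt_add_iff_right,
    Nat.forall_lt_succ_left', List.get_eq_getElem, List.getElem_cons_zero, List.getElem_cons_succ,
    List.getD_cons_zero, List.getD_cons_succ, ne_eq, reduceCtorEq, not_false_eq_true,
    Nat.add_right_cancel_iff, true_and]
  tauto

def AltPathFromLit (S : Set (Clause α)) (C : Clause α) (L : Lit α) (D : Clause α) (n : ℕ) :
    Prop :=
  ∃ Cs ps, IsAltPath S Cs ps ∧ Cs.head? = some C ∧ Cs.getLast? = some D ∧ Cs.length = n ∧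
    ps.head?.map Prod.fst = some L

theorem altPathFromTo_iff_exists_altPathFromLit {C D : Clause α} {n : ℕ} (hn : 2 ≤ n) :
    AltPathFromTo S C D n ↔ ∃ L, AltPathFromLit S C L D n := by
  constructor
  · rintro ⟨Cs, ps, hpath, hhead, hlast, hlen⟩
    obtain ⟨p, ps, rfl⟩ : ∃ p ps', ps = p :: ps' := by
      rcases ps with _ | ⟨p, ps⟩
      · have := hpath.2.1
        simp at this
        omega
      · exact ⟨p, ps, rfl⟩
    exact ⟨p.1, Cs, p :: ps, hpath, hhead, hlast, hlen, rfl⟩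
  · rintro ⟨L, Cs, ps, hpath, hhead, hlast, hlen, -⟩
    exact ⟨Cs, ps, hpath, hhead, hlast, hlen⟩

theorem altPathFromLit_two_iff {C D : Clause α} {L : Lit α} :
    AltPathFromLit S C L D 2 ↔ C ∈ S ∧ L ∈ C ∧ D ∈ S ∧ L.compl ∈ D := by
  constructor
  · rintro ⟨Cs, ps, hpath, hhead, hlast, hlen, hL⟩
    obtain ⟨C₁, C₂, rfl⟩ := List.length_eq_two.mp hlen
    obtain ⟨p, rfl⟩ : ∃ p, ps = [p] := List.length_eq_one_iff.mp (by have := hpath.2.1; simp_all)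
    obtain rfl : C₁ = C := by simpa using hhead
    obtain rfl : C₂ = D := by simpa using hlast
    obtain rfl : p.1 = L := by simpa using hL
    obtain ⟨hC, hD, hL, hLD, hcompl⟩ := isAltPath_pair_iff.mp hpath
    exact ⟨hC, hL, hD, hcompl ▸ hLD⟩
  · rintro ⟨hC, hL, hD, hLD⟩
    exact ⟨[C, D], [(L, L.compl)], isAltPath_pair_iff.mpr ⟨hC, hD, hL, hLD, rfl⟩,
      rfl, rfl, rfl, rfl⟩

theorem altPathFromLit_succ_iff {C D : Clause α} {L : Lit α} {n : ℕ} (hn : 2 ≤ n) :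
    AltPathFromLit S C L D (n + 1) ↔
      C ∈ S ∧ L ∈ C ∧ ∃ C', L.compl ∈ C' ∧ ∃ L' ≠ L.compl, AltPathFromLit S C' L' D n := by
  constructor
  · rintro ⟨Cs, ps, hpath, hhead, hlast, hlen, hL⟩
    obtain ⟨C₁, C', Cs, rfl⟩ : ∃ C₁ C' Cs', Cs = C₁ :: C' :: Cs' := by
      rcases Cs with _ | ⟨C₁, _ | ⟨C', Cs⟩⟩ <;> simp_all
    obtain ⟨p, q, ps, rfl⟩ : ∃ p q ps', ps = p :: q :: ps' := by
      have := hpath.2.1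
      rcases ps with _ | ⟨p, _ | ⟨q, ps⟩⟩ <;> simp_all
    obtain rfl : C₁ = C := by simpa using hhead
    obtain rfl : p.1 = L := by simpa using hL
    obtain ⟨hC, hL, hLC', hcompl, hq, hpath⟩ := isAltPath_cons_cons_iff.mp hpath
    refine ⟨hC, hL, C', hcompl ▸ hLC', q.1, hcompl ▸ hq, C' :: Cs, q :: ps, hpath, rfl, ?_, ?_, rfl⟩
    · simpa [List.getLast?_cons_cons] using hlast
    · simpa using hlen
  · rintro ⟨hC, hL, C', hLC', L', hL'ne, Cs, ps, hpath, hhead, hlast, hlen, hL'⟩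
    obtain ⟨Cs, rfl⟩ : ∃ Cs', Cs = C' :: Cs' := by
      rcases Cs with _ | ⟨C₁, Cs⟩
      · simp at hhead
      · exact ⟨Cs, by simpa using hhead⟩
    obtain ⟨q, ps, rfl, rfl⟩ : ∃ q ps', ps = q :: ps' ∧ q.1 = L' := by
      rcases ps with _ | ⟨q, ps⟩
      · simp at hL'
      · exact ⟨q, ps, rfl, by simpa using hL'⟩
    refine ⟨C :: C' :: Cs, (L, L.compl) :: q :: ps,
      isAltPath_cons_cons_iff.mpr ⟨hC, hL, hLC', rfl, hL'ne, hpath⟩, rfl, ?_, ?_, rfl⟩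
    · simpa [List.getLast?_cons_cons] using hlast
    · simpa using hlen

theorem altPathFromLit_iff_gPathFromLit {C D : Clause α} {L : Lit α} {n : ℕ} (hn : 2 ≤ n) :
    AltPathFromLit S C L D n ↔ GPathFromLit S C L D (2 * (n - 1)) := by
  induction n, hn using Nat.le_induction generalizing C L with
  | base => rw [altPathFromLit_two_iff, gPathFromLit_two_iff]
  | succ n hn ih =>
    rw [altPathFromLit_succ_iff hn, show 2 * (n + 1 - 1) = 2 * (n - 1) + 2 by omega,
      gPathFromLit_add_two_iff (by omega)]
    simp only [ih]

end

theorem stmt_14_general {α : Type} [DecidableEq α] (S : Set (Clause α)) (n : ℕ)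
    (hn : 2 ≤ n) (C D : Clause α) :
    AltPathFromTo S C D n ↔
      ∃ L ∈ C, ∃ M ∈ D, ∃ vs : List (Vtx α),
        vs.length = 2 * (n - 1) ∧
        vs.head? = some ⟨L, C, true⟩ ∧
        vs.getLast? = some ⟨M, D, false⟩ ∧
        vs.Chain' (GEdge S) ∧ (∀ v ∈ vs, ValidVtx S v) := by
  rw [altPathFromTo_iff_exists_altPathFromLit hn]
  simp only [altPathFromLit_iff_gPathFromLit hn]
  exact ⟨fun ⟨L, h⟩ => ⟨L, h.lit_mem, h⟩, fun ⟨L, _, h⟩ => ⟨L, h⟩⟩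

/-- For `n ≥ 2` and clauses `C, D ∈ S`: there is an alternating path of length `n`
in `S` from `C` to `D` iff there are literals `L ∈ C` and `M ∈ D` and a directed
path in `G_S` from the vertex `(L, C, out)` to the vertex `(M, D, in)` consisting
of exactly `2(n − 1)` vertices. -/
theorem stmt_14 {α : Type} [DecidableEq α] (S : Set (Clause α)) (n : ℕ)
    (hn : 2 ≤ n) (C D : Clause α) (hC : C ∈ S) (hD : D ∈ S) :
    AltPathFromTo S C D n ↔
      ∃ L ∈ C, ∃ M ∈ D, ∃ vs : List (Vtx α),
        vs.length = 2 * (n - 1) ∧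
        vs.head? = some ⟨L, C, true⟩ ∧
        vs.getLast? = some ⟨M, D, false⟩ ∧
        vs.Chain' (GEdge S) ∧ (∀ v ∈ vs, ValidVtx S v) :=
  stmt_14_general S n hn C D
end

section
/- For any set S of propositional clauses, the set of all clauses of S all of whose literals have positive sign is a support set for S; likewise, the set of all clauses of S all of whose literals have negative sign is a support set for S. -/
/-! A clause with some literal of sign `!b` is satisfied by the constant valuation `!b`, so every
set of clauses avoiding the all-`b` clauses is satisfiable. -/

theorem satClause_const_iff {α : Type} (b : Bool) (C : Clause α) :
    SatClause (fun _ => b) C ↔ ∃ L ∈ C, L.2 = b := by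
  simp only [SatClause, SatLit, eq_comm]

theorem isSupport_sep_forall_sign_eq {α : Type} (S : Set (Clause α)) (b : Bool) :
    IsSupport S {C ∈ S | ∀ L ∈ C, L.2 = b} := by
  refine ⟨fun C hC => hC.1, fun T hTS hT => ?_⟩
  by_contra hdisj
  refine hT ⟨fun _ => !b, fun C hC => (satClause_const_iff _ C).2 ?_⟩
  obtain ⟨L, hL, hLb⟩ : ∃ L ∈ C, L.2 ≠ b := by
    by_contra! hall
    exact hdisj ⟨C, hC, hTS hC, hall⟩
  exact ⟨L, hL, Bool.eq_not_of_ne hLb⟩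

/-- The set of all-positive clauses of `S` is a support set for `S`, and likewise
the set of all-negative clauses of `S`. -/
theorem stmt_15 {α : Type} (S : Set (Clause α)) :
    IsSupport S {C ∈ S | ∀ L ∈ C, L.2 = true} ∧
    IsSupport S {C ∈ S | ∀ L ∈ C, L.2 = false} :=
  ⟨isSupport_sep_forall_sign_eq S true, isSupport_sep_forall_sign_eq S false⟩
end
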